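/- Let P = (P_0, ..., P_n) be a sequence of n+1 matrices in GL_n(F_2) and let W(P) = P(P_0)·(I_{2^{n-1}} ⊗ DFT_2)·P(P_1)·...·(I_{2^{n-1}} ⊗ DFT_2)·P(P_n), where P(Q) denotes the permutation matrix of π(Q). Then every entry of column 0 of W(P) is nonzero if and only if the spreading matrix X = (P_{0:n-1}·1_b | P_{0:n-2}·1_b | ... | P_0·1_b) is invertible over F_2, where 1_b = (0,...,0,1)^T and P_{i:j} = P_i P_{i+1} ⋯ P_j. -/

import Mathlib

/-!
Index vectors of length `2^n` by `F_2^n` through `bits` and write `e_y` for the basis vector at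
`y`. Then `P(Q) e_y = e_{Q y}` and `(I ⊗ DFT₂) e_y = ± e_y + e_{y + 1_b}`. Peeling the stages of
`W(P)` off from the left, column `0`, i.e. `W(P) e_0`, is `∑_{t ∈ F_2^n} ± e_{X t}`: every
butterfly contributes a fresh coordinate `t_k`, which the permutations standing to its left carry
to the column `P_{0:n-k} 1_b` of `X`. Entry `y` is thus a sum of signs over the fibre of `X`
above `y`; it vanishes as soon as `y ∉ range X`, and it is `±1` for all `y` when `X` is bijective.
-/

open Matrix

/-- Binary representation of `i` as a vector in `F_2^n`, most significant bit first. -/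
def bits (n : ℕ) (i : Fin (2 ^ n)) : Fin n → ZMod 2 :=
  fun k => if Nat.testBit i.val (n - 1 - k.val) then 1 else 0

/-- The vector `1_b = (0,...,0,1)ᵀ`. -/
def oneb (n : ℕ) : Fin n → ZMod 2 := fun k => if k.val = n - 1 then 1 else 0

/-- Permutation matrix `P(Q)` of the linear permutation `π(Q)`:
entry `(j, i)` is `1` iff `j_b = Q i_b`. -/
def permMat (n : ℕ) (Q : Matrix (Fin n) (Fin n) (ZMod 2)) :
    Matrix (Fin (2 ^ n)) (Fin (2 ^ n)) ℤ :=
  Matrix.of fun j i => if bits n j = Q.mulVec (bits n i) then 1 else 0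

/-- The array of butterflies `I_{2^{n-1}} ⊗ DFT_2`. -/
def butterflies (n : ℕ) : Matrix (Fin (2 ^ n)) (Fin (2 ^ n)) ℤ :=
  Matrix.of fun j i =>
    if j.val / 2 = i.val / 2 then (if j.val % 2 = 1 ∧ i.val % 2 = 1 then -1 else 1) else 0

/-- `W(P) = P(P₀)·(I ⊗ DFT₂)·P(P₁) ⋯ (I ⊗ DFT₂)·P(Pₙ)`. -/
def W (n : ℕ) (P : ℕ → Matrix (Fin n) (Fin n) (ZMod 2)) :
    Matrix (Fin (2 ^ n)) (Fin (2 ^ n)) ℤ :=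
  permMat n (P 0) * (List.ofFn fun k : Fin n => butterflies n * permMat n (P (k.val + 1))).prod

/-- `P_{i:j} = P_i P_{i+1} ⋯ P_j` (identity if `j < i`). -/
def Pseg {n : ℕ} (P : ℕ → Matrix (Fin n) (Fin n) (ZMod 2)) (i j : ℕ) :
    Matrix (Fin n) (Fin n) (ZMod 2) :=
  ((List.range (j + 1 - i)).map fun k => P (i + k)).prod

/-- The spreading matrix `X = (P_{0:n-1}1_b | P_{0:n-2}1_b | ⋯ | P_0 1_b)`. -/
def spread (n : ℕ) (P : ℕ → Matrix (Fin n) (Fin n) (ZMod 2)) :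
    Matrix (Fin n) (Fin n) (ZMod 2) :=
  Matrix.of fun r c => (Pseg P 0 (n - 1 - c.val)).mulVec (oneb n) r

/-- The matrix whose rows are `(P_{0:n-1}^{-T}1_b)ᵀ, ..., (P_0^{-T}1_b)ᵀ`. -/
noncomputable def spreadInvRows (n : ℕ) (P : ℕ → Matrix (Fin n) (Fin n) (ZMod 2)) :
    Matrix (Fin n) (Fin n) (ZMod 2) :=
  Matrix.of fun r c => (Pseg P 0 (n - 1 - r.val))⁻¹.transpose.mulVec (oneb n) c

/-- The Hadamard matrix `H_n` with entries `(-1)^{⟨i_b, j_b⟩}`. -/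
def hadamard (n : ℕ) : Matrix (Fin (2 ^ n)) (Fin (2 ^ n)) ℤ :=
  Matrix.of fun i j => (-1) ^ (∑ k, bits n i k * bits n j k).val

/-- The cyclic bit-rotation matrix `C_n`: ones on the superdiagonal and in the
bottom-left corner. -/
def Cmat (n : ℕ) : Matrix (Fin n) (Fin n) (ZMod 2) :=
  Matrix.of fun k l => if l.val = k.val + 1 ∨ (k.val = n - 1 ∧ l.val = 0) then 1 else 0

lemma bits_succ {n : ℕ} (i : Fin (2 ^ (n + 1))) :
    bits (n + 1) i = Fin.snoc (bits n ⟨i / 2, by omega⟩) ((i : ℕ) : ZMod 2) := by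
  funext k
  induction k using Fin.lastCases with
  | last =>
    rcases Nat.mod_two_eq_zero_or_one i with h | h <;>
      simp [bits, Nat.testBit_zero, ← ZMod.natCast_mod (i : ℕ), h]
  | cast k =>
    have hk : n - k = (n - 1 - k) + 1 := by omega
    simp [bits, hk, Nat.testBit_div_two]

lemma bits_injective (n : ℕ) : Function.Injective (bits n) := by
  induction n with
  | zero => exact fun i j _ => Fin.ext (by omega)
  | succ n ih =>
    intro i j h
    rw [bits_succ, bits_succ, Fin.snoc_inj, ZMod.natCast_eq_natCast_iff' _ _ 2] at h
    have := congrArg Fin.val (ih h.1)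
    simp only at this
    omega

noncomputable def bitsEquiv (n : ℕ) : Fin (2 ^ n) ≃ (Fin n → ZMod 2) :=
  Equiv.ofBijective (bits n) <| by
    rw [Fintype.bijective_iff_injective_and_card]
    simp [bits_injective]

lemma bits_zero (n : ℕ) : bits n ⟨0, by positivity⟩ = 0 := by
  funext k
  simp [bits]

@[simp]
lemma bits_bitsEquiv_symm (n : ℕ) (y : Fin n → ZMod 2) : bits n ((bitsEquiv n).symm y) = y :=
  (bitsEquiv n).apply_symm_apply y

def bitBasis (n : ℕ) (y : Fin n → ZMod 2) : Fin (2 ^ n) → ℤ :=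
  fun j => if bits n j = y then 1 else 0

lemma bitBasis_eq_single (n : ℕ) (y : Fin n → ZMod 2) :
    bitBasis n y = Pi.single ((bitsEquiv n).symm y) 1 := by
  ext j
  simp [bitBasis, Pi.single_apply, Equiv.eq_symm_apply, bitsEquiv]

lemma bitBasis_zero (n : ℕ) : bitBasis n 0 = Pi.single ⟨0, by positivity⟩ 1 := by
  rw [bitBasis_eq_single, (bitsEquiv n).symm_apply_eq.mpr (bits_zero n).symm]

lemma permMat_mulVec_bitBasis {n : ℕ} (Q : Matrix (Fin n) (Fin n) (ZMod 2)) (y : Fin n → ZMod 2) :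
    permMat n Q *ᵥ bitBasis n y = bitBasis n (Q *ᵥ y) := by
  ext j
  rw [bitBasis_eq_single n y, mulVec_single_one]
  simp [permMat, bitBasis]

lemma snoc_add_oneb {n : ℕ} (x : Fin n → ZMod 2) (a : ZMod 2) :
    Fin.snoc x a + oneb (n + 1) = Fin.snoc (α := fun _ => ZMod 2) x (a + 1) := by
  funext k
  induction k using Fin.lastCases with
  | last => simp [oneb]
  | cast k => simp [oneb, k.isLt.ne]

lemma butterflies_mulVec_bitBasis {n : ℕ} (y : Fin (n + 1) → ZMod 2) :
    butterflies (n + 1) *ᵥ bitBasis (n + 1) y =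
      (-1 : ℤˣ) ^ (y (Fin.last n)).val • bitBasis (n + 1) y +
        bitBasis (n + 1) (y + oneb (n + 1)) := by
  obtain ⟨i, rfl⟩ := (bitsEquiv (n + 1)).surjective y
  ext j
  rw [bitBasis_eq_single (n + 1) (bitsEquiv (n + 1) i), mulVec_single_one,
    Equiv.symm_apply_apply]
  have hsucc : ((i : ℕ) : ZMod 2) + 1 = ((i + 1 : ℕ) : ZMod 2) := by push_cast; rfl
  simp only [bitsEquiv, Equiv.ofBijective_apply, col_apply, bitBasis, Pi.add_apply,
    Pi.smul_apply, butterflies, of_apply, Pi.single_apply, Units.smul_def]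
  simp only [bits_succ j, bits_succ i, snoc_add_oneb, Fin.snoc_inj, (bits_injective n).eq_iff,
    Fin.ext_iff, Fin.snoc_last, ZMod.val_natCast, hsucc, ZMod.natCast_eq_natCast_iff' _ _ 2]
  rcases Nat.mod_two_eq_zero_or_one j with hj | hj <;>
    rcases Nat.mod_two_eq_zero_or_one i with hi | hi <;>
    by_cases h : (j : ℕ) / 2 = i / 2 <;> simp [hi, hj, h, Nat.add_mod] <;> omega

def butterflyNetwork (n m : ℕ) (Q : ℕ → Matrix (Fin n) (Fin n) (ZMod 2)) :
    Matrix (Fin (2 ^ n)) (Fin (2 ^ n)) ℤ :=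
  permMat n (Q 0) * (List.ofFn fun k : Fin m => butterflies n * permMat n (Q (k.val + 1))).prod

lemma butterflyNetwork_succ (n m : ℕ) (Q : ℕ → Matrix (Fin n) (Fin n) (ZMod 2)) :
    butterflyNetwork n (m + 1) Q =
      permMat n (Q 0) * butterflies n * butterflyNetwork n m (fun k => Q (k + 1)) := by
  simp [butterflyNetwork, List.ofFn_succ, Matrix.mul_assoc]

def spreadingMatrix (n m : ℕ) (Q : ℕ → Matrix (Fin n) (Fin n) (ZMod 2)) :
    Matrix (Fin n) (Fin m) (ZMod 2) :=
  Matrix.of fun r c => (Pseg Q 0 (m - 1 - c.val)).mulVec (oneb n) r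

lemma Pseg_zero_zero {n : ℕ} (Q : ℕ → Matrix (Fin n) (Fin n) (ZMod 2)) : Pseg Q 0 0 = Q 0 := by
  simp [Pseg]

lemma Pseg_zero_succ {n : ℕ} (Q : ℕ → Matrix (Fin n) (Fin n) (ZMod 2)) (j : ℕ) :
    Pseg Q 0 (j + 1) = Q 0 * Pseg (fun k => Q (k + 1)) 0 j := by
  simp [Pseg, List.range_succ_eq_map (n := j + 1), Function.comp_def]

lemma spreadingMatrix_transpose_apply {n m : ℕ} (Q : ℕ → Matrix (Fin n) (Fin n) (ZMod 2))
    (c : Fin m) : (spreadingMatrix n m Q)ᵀ c = Pseg Q 0 (m - 1 - c) *ᵥ oneb n :=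
  rfl

lemma spreadingMatrix_succ_mulVec_snoc {n m : ℕ} (Q : ℕ → Matrix (Fin n) (Fin n) (ZMod 2))
    (t : Fin m → ZMod 2) (r : ZMod 2) :
    spreadingMatrix n (m + 1) Q *ᵥ Fin.snoc t r =
      Q 0 *ᵥ (spreadingMatrix n m (fun k => Q (k + 1)) *ᵥ t + r • oneb n) := by
  have hcol (c : Fin m) : (spreadingMatrix n (m + 1) Q)ᵀ c.castSucc =
      Q 0 *ᵥ (spreadingMatrix n m (fun k => Q (k + 1)))ᵀ c := by
    rw [spreadingMatrix_transpose_apply, spreadingMatrix_transpose_apply, Fin.val_castSucc,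
      show m + 1 - 1 - c = (m - 1 - c) + 1 by omega, Pseg_zero_succ, mulVec_mulVec]
  have hlast : (spreadingMatrix n (m + 1) Q)ᵀ (Fin.last m) = Q 0 *ᵥ oneb n := by
    rw [spreadingMatrix_transpose_apply, Fin.val_last, Nat.add_sub_cancel, Nat.sub_self,
      Pseg_zero_zero]
  rw [mulVec_eq_sum, Fin.sum_univ_castSucc, mulVec_add, mulVec_eq_sum t, mulVec_sum]
  simp only [op_smul_eq_smul, Fin.snoc_castSucc, Fin.snoc_last, hcol, hlast, mulVec_smul]

-- `rw [Fin.sum_univ_two]` does not fire on `ZMod 2`, whose numerals are not those of `Fin 2`.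
lemma sum_zmod_two {M : Type*} [AddCommMonoid M] (f : ZMod 2 → M) : ∑ r, f r = f 0 + f 1 :=
  Fin.sum_univ_two f

lemma permMat_butterflies_mulVec_bitBasis {n : ℕ}
    (Q : Matrix (Fin (n + 1)) (Fin (n + 1)) (ZMod 2)) (y : Fin (n + 1) → ZMod 2) :
    permMat (n + 1) Q *ᵥ (butterflies (n + 1) *ᵥ bitBasis (n + 1) y) =
      ∑ r : ZMod 2, (-1 : ℤˣ) ^ (y (Fin.last n) * (r + 1)).val •
        bitBasis (n + 1) (Q *ᵥ (y + r • oneb (n + 1))) := by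
  rw [butterflies_mulVec_bitBasis, mulVec_add, Units.smul_def, mulVec_smul, ← Units.smul_def,
    permMat_mulVec_bitBasis, permMat_mulVec_bitBasis, sum_zmod_two]
  simp [show (1 + 1 : ZMod 2) = 0 from rfl]

theorem butterflyNetwork_mulVec_bitBasis_zero (n m : ℕ)
    (Q : ℕ → Matrix (Fin (n + 1)) (Fin (n + 1)) (ZMod 2)) :
    ∃ ε : (Fin m → ZMod 2) → ℤˣ, butterflyNetwork (n + 1) m Q *ᵥ bitBasis (n + 1) 0 =
      ∑ t, ε t • bitBasis (n + 1) (spreadingMatrix (n + 1) m Q *ᵥ t) := by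
  induction m generalizing Q with
  | zero => exact ⟨1, by simp [butterflyNetwork, permMat_mulVec_bitBasis]⟩
  | succ m ih =>
    obtain ⟨ε, hε⟩ := ih (fun k => Q (k + 1))
    let A := spreadingMatrix (n + 1) m (fun k => Q (k + 1))
    refine ⟨fun t => ε (Fin.init t) * (-1) ^ ((A *ᵥ Fin.init t) (Fin.last n) * (t (Fin.last m) + 1)).val,
      ?_⟩
    simp only [butterflyNetwork_succ, ← mulVec_mulVec, hε, mulVec_sum]
    rw [← (Fin.snocEquiv _).sum_comp, Fintype.sum_prod_type_right]
    refine Finset.sum_congr rfl fun t _ => ?_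
    have hsnoc (r : ZMod 2) : Fin.snocEquiv (fun _ => ZMod 2) (r, t) = Fin.snoc t r := rfl
    simp only [mulVec_smul, permMat_butterflies_mulVec_bitBasis, hsnoc,
      spreadingMatrix_succ_mulVec_snoc, Finset.smul_sum, mul_smul, Fin.init_snoc, Fin.snoc_last]
    rfl

lemma sum_units_smul_bitBasis_apply {α : Type*} [Fintype α] {n : ℕ} (f : α → Fin n → ZMod 2)
    (ε : α → ℤˣ) (j : Fin (2 ^ n)) :
    (∑ a, ε a • bitBasis n (f a)) j = ∑ a, if f a = bits n j then (ε a : ℤ) else 0 := by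
  simp [bitBasis, Finset.sum_apply, Units.smul_def, eq_comm]

lemma forall_sum_ite_mulVec_ne_zero_iff {R ι : Type*} [CommRing R] [Fintype R] [DecidableEq R]
    [Fintype ι] [DecidableEq ι] (A : Matrix ι ι R) (ε : (ι → R) → ℤˣ) :
    (∀ y, ∑ t, (if A *ᵥ t = y then (ε t : ℤ) else 0) ≠ 0) ↔ IsUnit A := by
  rw [← mulVec_surjective_iff_isUnit]
  constructor
  · intro h y
    obtain ⟨t, -, ht⟩ := Finset.exists_ne_zero_of_sum_ne_zero (h y)
    exact ⟨t, by_contra fun hne => ht (if_neg hne)⟩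
  · intro hsurj y
    obtain ⟨t₀, rfl⟩ := hsurj y
    simp only [(Finite.injective_iff_surjective.mpr hsurj).eq_iff, Finset.sum_ite_eq',
      Finset.mem_univ, if_true]
    exact (ε t₀).ne_zero

/-- Column `0` of `W(P)` has all entries nonzero iff the spreading matrix `X` is
invertible over `F_2`. -/
theorem column_zero_nonzero_iff_spread_invertible (n : ℕ)
    (P : ℕ → Matrix (Fin n) (Fin n) (ZMod 2)) :
    (∀ j : Fin (2 ^ n), W n P j ⟨0, by positivity⟩ ≠ 0) ↔ IsUnit (spread n P) := by
  rcases n with _ | n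
  · refine iff_of_true (fun j => ?_) (isUnit_of_subsingleton _)
    simp [W, permMat, Subsingleton.elim (bits 0 j) ![]]
  · obtain ⟨ε, hε⟩ : ∃ ε : (Fin (n + 1) → ZMod 2) → ℤˣ, W (n + 1) P *ᵥ bitBasis (n + 1) 0 =
        ∑ t, ε t • bitBasis (n + 1) (spread (n + 1) P *ᵥ t) :=
      butterflyNetwork_mulVec_bitBasis_zero n (n + 1) P
    have hcol (j : Fin (2 ^ (n + 1))) : W (n + 1) P j ⟨0, by positivity⟩ =
        ∑ t, if spread (n + 1) P *ᵥ t = bits (n + 1) j then (ε t : ℤ) else 0 := by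
      rw [← sum_units_smul_bitBasis_apply, ← hε, bitBasis_zero, mulVec_single_one]
      rfl
    simp only [hcol]
    rw [← forall_sum_ite_mulVec_ne_zero_iff _ ε, (bitsEquiv (n + 1)).forall_congr_left]
    simp only [bits_bitsEquiv_symm]
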